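/- arXiv:1707.06296 — 3 statements merged into one kernel-verified Lean document; each statement's English description precedes it below -/
import Mathlib

section
/- Let Γ = (U, V, E) be a finite bipartite graph, let ε > 0, and suppose there are partitions U = U¹ ⊔ ⋯ ⊔ Uⁿ and V = V¹ ⊔ ⋯ ⊔ Vᵐ such that for all i, j the induced bipartite graph Γ[Uⁱ, Vʲ] = (Uⁱ, Vʲ, E ∩ (Uⁱ × Vʲ)) is ε-homogeneous of density w_{ij} ∈ [0,1]. Let W' : [0,1]² → [0,1] be the function taking the value w_{ij} on (⋃_{u_k ∈ Uⁱ} I_k) × (⋃_{v_l ∈ Vʲ} J_l). Then ‖W_Γ − W'‖_□ ≤ ε. -/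
open MeasureTheory Set
open scoped Classical

/-- The cut norm of a kernel: the supremum of `|∫_{S×T} W|` over measurable
`S, T ⊆ [0,1]`. -/
noncomputable def cutNorm (W : ℝ → ℝ → ℝ) : ℝ :=
  sSup { r : ℝ | ∃ S T : Set ℝ, MeasurableSet S ∧ MeasurableSet T ∧
    S ⊆ Set.Icc 0 1 ∧ T ⊆ Set.Icc 0 1 ∧
    r = |∫ p in S ×ˢ T, W p.1 p.2| }

/-- The `i`-th of `p` consecutive subintervals of `[0,1]` of equal length `1/p`,
half-open except that the last one is closed. -/
noncomputable def blockInterval (p i : ℕ) : Set ℝ :=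
  if i + 1 = p then Set.Icc ((i : ℝ) / p) ((i + 1 : ℝ) / p)
  else Set.Ico ((i : ℝ) / p) ((i + 1 : ℝ) / p)

/-- The stepfunction associated to a finite bipartite graph with parts `Fin p`, `Fin r`
and edge set `E`. -/
noncomputable def graphStep (p r : ℕ) (E : Finset (Fin p × Fin r)) : ℝ → ℝ → ℝ :=
  fun x y =>
    if ∃ i : Fin p, ∃ j : Fin r, (i, j) ∈ E ∧
        x ∈ blockInterval p i.val ∧ y ∈ blockInterval r j.val then 1 else 0

/-! On each block `I_u × J_v` the kernel `W_Γ - W'` is the constant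
`c u v = 𝟙_E(u, v) - w (P u) (Q v)`, so its integral over `S × T` is the bilinear form
`∑ a_u b_v c u v` in the weights `a_u = |S ∩ I_u| ∈ [0, 1/p]` and `b_v = |T ∩ J_v| ∈ [0, 1/r]`.
Being affine in each weight, the form is extremal when every `p a_u` and `r b_v` is `0` or `1`,
i.e. on the sums `∑_{u ∈ A, v ∈ B} c u v`. Splitting `A` and `B` along the partitions writes such
a sum as `∑_{i,j} (e(Aⁱ, Bʲ) - w_{ij} |Aⁱ| |Bʲ|)`, which homogeneity bounds by
`ε ∑_{i,j} |Uⁱ| |Vʲ| = ε p r`. -/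

theorem sum_mul_le_of_forall_sum_le {ι : Type*} [Fintype ι] {a g : ι → ℝ} {M : ℝ}
    (ha : ∀ u, a u ∈ Icc (0 : ℝ) 1) (hM : ∀ A : Finset ι, ∑ u ∈ A, g u ≤ M) :
    ∑ u, a u * g u ≤ M := by
  classical
  calc ∑ u, a u * g u ≤ ∑ u, if 0 ≤ g u then g u else 0 := by
        refine Finset.sum_le_sum fun u _ => ?_
        obtain ⟨ha₀, ha₁⟩ := ha u
        split_ifs with hg <;> nlinarith
    _ = ∑ u ∈ Finset.univ.filter (fun u => 0 ≤ g u), g u := (Finset.sum_filter _ _).symm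
    _ ≤ M := hM _

theorem abs_sum_mul_le_of_forall_abs_sum_le {ι : Type*} [Fintype ι] {a g : ι → ℝ} {M : ℝ}
    (ha : ∀ u, a u ∈ Icc (0 : ℝ) 1) (hM : ∀ A : Finset ι, |∑ u ∈ A, g u| ≤ M) :
    |∑ u, a u * g u| ≤ M := by
  have upper := sum_mul_le_of_forall_sum_le ha fun A => (le_abs_self _).trans (hM A)
  have lower := sum_mul_le_of_forall_sum_le (g := fun u => -g u) ha fun A => by
    simpa only [Finset.sum_neg_distrib] using (neg_le_abs _).trans (hM A)
  simp only [mul_neg, Finset.sum_neg_distrib] at lower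
  exact abs_le.2 ⟨by linarith, upper⟩

theorem abs_sum_sum_mul_le_of_forall_abs_sum_sum_le {ι κ : Type*} [Fintype ι] [Fintype κ]
    {a : ι → ℝ} {b : κ → ℝ} {c : ι → κ → ℝ} {M : ℝ}
    (ha : ∀ u, a u ∈ Icc (0 : ℝ) 1) (hb : ∀ v, b v ∈ Icc (0 : ℝ) 1)
    (hM : ∀ (A : Finset ι) (B : Finset κ), |∑ u ∈ A, ∑ v ∈ B, c u v| ≤ M) :
    |∑ u, ∑ v, a u * b v * c u v| ≤ M := by
  simp only [mul_assoc, ← Finset.mul_sum]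
  refine abs_sum_mul_le_of_forall_abs_sum_le ha fun A => ?_
  rw [Finset.sum_comm]
  simp only [← Finset.mul_sum]
  refine abs_sum_mul_le_of_forall_abs_sum_le hb fun B => ?_
  rw [Finset.sum_comm]
  exact hM A B

section Discrepancy

variable {U V ι κ : Type*}

theorem sum_sum_indicator_sub_const [DecidableEq U] [DecidableEq V] (E : Finset (U × V))
    (A : Finset U) (B : Finset V) (w₀ : ℝ) :
    ∑ u ∈ A, ∑ v ∈ B, ((if (u, v) ∈ E then 1 else 0) - w₀)
      = ((E.filter fun q => q.1 ∈ A ∧ q.2 ∈ B).card : ℝ) - w₀ * A.card * B.card := by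
  have hfilter : (A ×ˢ B).filter (· ∈ E) = E.filter fun q => q.1 ∈ A ∧ q.2 ∈ B := by
    ext q
    simp only [Finset.mem_filter, Finset.mem_product]
    tauto
  rw [← Finset.sum_product' A B fun u v => (if (u, v) ∈ E then (1 : ℝ) else 0) - w₀,
    Finset.sum_sub_distrib, Finset.sum_boole, hfilter, Finset.sum_const, Finset.card_product,
    nsmul_eq_mul]
  push_cast
  ring

theorem sum_sum_eq_sum_sum_fiberwise [Fintype ι] [Fintype κ] [DecidableEq ι] [DecidableEq κ]
    {M : Type*} [AddCommMonoid M] (P : U → ι) (Q : V → κ) (A : Finset U) (B : Finset V)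
    (f : U → V → M) :
    ∑ u ∈ A, ∑ v ∈ B, f u v
      = ∑ i, ∑ j, ∑ u ∈ A.filter (P · = i), ∑ v ∈ B.filter (Q · = j), f u v := by
  rw [← Finset.sum_fiberwise A P fun u => ∑ v ∈ B, f u v]
  refine Finset.sum_congr rfl fun i _ => ?_
  exact (Finset.sum_congr rfl fun u _ => (Finset.sum_fiberwise B Q (f u)).symm).trans
    Finset.sum_comm

theorem sum_card_fiber_eq_card [Fintype U] [Fintype ι] [DecidableEq ι] (P : U → ι) :
    ∑ i, ((Finset.univ.filter (fun u => P u = i)).card : ℝ) = Fintype.card U := by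
  exact_mod_cast (Finset.card_eq_sum_card_fiberwise fun u _ => Finset.mem_univ (P u)).symm

theorem abs_sum_sum_discrepancy_le [Fintype U] [Fintype V] [DecidableEq U] [DecidableEq V]
    [Fintype ι] [Fintype κ] [DecidableEq ι] [DecidableEq κ]
    (E : Finset (U × V)) (P : U → ι) (Q : V → κ) (w : ι → κ → ℝ) {ε : ℝ}
    (hhom : ∀ i j, ∀ A : Finset U, ∀ B : Finset V,
      (∀ u ∈ A, P u = i) → (∀ v ∈ B, Q v = j) →
      |((E.filter (fun q => q.1 ∈ A ∧ q.2 ∈ B)).card : ℝ) - w i j * A.card * B.card|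
        ≤ ε * ((Finset.univ.filter (fun u => P u = i)).card : ℝ)
            * ((Finset.univ.filter (fun v => Q v = j)).card : ℝ))
    (A : Finset U) (B : Finset V) :
    |∑ u ∈ A, ∑ v ∈ B, ((if (u, v) ∈ E then 1 else 0) - w (P u) (Q v))|
      ≤ ε * Fintype.card U * Fintype.card V := by
  have hblock : ∀ i j, |∑ u ∈ A.filter (P · = i), ∑ v ∈ B.filter (Q · = j),
      ((if (u, v) ∈ E then 1 else 0) - w (P u) (Q v))|
        ≤ ε * ((Finset.univ.filter (fun u => P u = i)).card : ℝ)
            * ((Finset.univ.filter (fun v => Q v = j)).card : ℝ) := by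
    intro i j
    have hw : ∀ u ∈ A.filter (P · = i), ∀ v ∈ B.filter (Q · = j),
        (if (u, v) ∈ E then (1 : ℝ) else 0) - w (P u) (Q v)
          = (if (u, v) ∈ E then 1 else 0) - w i j := by
      intro u hu v hv
      rw [(Finset.mem_filter.1 hu).2, (Finset.mem_filter.1 hv).2]
    rw [Finset.sum_congr rfl fun u hu => Finset.sum_congr rfl (hw u hu),
      sum_sum_indicator_sub_const]
    exact hhom i j _ _ (fun u hu => (Finset.mem_filter.1 hu).2)
      (fun v hv => (Finset.mem_filter.1 hv).2)
  rw [sum_sum_eq_sum_sum_fiberwise P Q]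
  calc _ ≤ ∑ i, ∑ j, ε * ((Finset.univ.filter (fun u => P u = i)).card : ℝ)
            * ((Finset.univ.filter (fun v => Q v = j)).card : ℝ) := by
        refine (Finset.abs_sum_le_sum_abs _ _).trans (Finset.sum_le_sum fun i _ => ?_)
        exact (Finset.abs_sum_le_sum_abs _ _).trans (Finset.sum_le_sum fun j _ => hblock i j)
    _ = ε * Fintype.card U * Fintype.card V := by
        simp only [mul_assoc, ← Finset.mul_sum, ← Finset.sum_mul]
        rw [sum_card_fiber_eq_card P, sum_card_fiber_eq_card Q]

end Discrepancy

section BlockInterval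

theorem measurableSet_blockInterval (p i : ℕ) : MeasurableSet (blockInterval p i) := by
  unfold blockInterval
  split_ifs
  exacts [measurableSet_Icc, measurableSet_Ico]

theorem Ico_subset_blockInterval (p i : ℕ) :
    Ico ((i : ℝ) / p) ((i + 1 : ℝ) / p) ⊆ blockInterval p i := by
  unfold blockInterval
  split_ifs
  exacts [Ico_subset_Icc_self, subset_rfl]

theorem blockInterval_subset_Icc (p i : ℕ) :
    blockInterval p i ⊆ Icc ((i : ℝ) / p) ((i + 1 : ℝ) / p) := by
  unfold blockInterval
  split_ifs
  exacts [subset_rfl, Ico_subset_Icc_self]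

theorem volume_real_blockInterval (p i : ℕ) : volume.real (blockInterval p i) = 1 / p := by
  have hlen : ((i : ℝ) + 1) / p - i / p = 1 / p := by ring
  have hpos : (0 : ℝ) ≤ 1 / p := by positivity
  unfold blockInterval
  split_ifs <;> simp only [Real.volume_real_Icc, Real.volume_real_Ico, hlen, max_eq_left hpos]

theorem mul_volume_real_inter_blockInterval_mem_Icc (p i : ℕ) (S : Set ℝ) :
    (p : ℝ) * volume.real (S ∩ blockInterval p i) ∈ Icc (0 : ℝ) 1 := by
  refine ⟨by positivity, ?_⟩
  calc (p : ℝ) * volume.real (S ∩ blockInterval p i)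
      ≤ p * volume.real (blockInterval p i) := by
        gcongr
        · exact (measure_mono (blockInterval_subset_Icc p i)).trans_lt measure_Icc_lt_top |>.ne
        · exact inter_subset_right
    _ ≤ 1 := by
        rw [volume_real_blockInterval]
        rcases eq_or_ne (p : ℝ) 0 with h | h <;> simp [h]

theorem pairwise_disjoint_blockInterval (p : ℕ) :
    Pairwise (Function.onFun Disjoint fun i : Fin p => blockInterval p i) := by
  refine (pairwise_disjoint_on _).2 fun i j hij => Set.disjoint_left.2 fun x hxi hxj => ?_
  have hij' : (i : ℝ) + 1 ≤ j := by exact_mod_cast hij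
  rw [blockInterval, if_neg (by omega)] at hxi
  have : ((i : ℝ) + 1) / p ≤ j / p := by gcongr
  linarith [hxi.2, (blockInterval_subset_Icc p j hxj).1]

theorem eq_of_mem_blockInterval {p : ℕ} {i j : Fin p} {x : ℝ} (hi : x ∈ blockInterval p i)
    (hj : x ∈ blockInterval p j) : i = j := by
  by_contra h
  exact Set.disjoint_left.1 (pairwise_disjoint_blockInterval p h) hi hj

theorem exists_mem_blockInterval {p : ℕ} (hp : 0 < p) {x : ℝ} (hx : x ∈ Icc (0 : ℝ) 1) :
    ∃ i : Fin p, x ∈ blockInterval p i := by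
  have hp' : (0 : ℝ) < p := by exact_mod_cast hp
  rcases hx.2.eq_or_lt with rfl | hx1
  · refine ⟨⟨p - 1, by omega⟩, ?_⟩
    have hlast : ((p - 1 : ℕ) : ℝ) + 1 = p := by rw [Nat.cast_sub hp]; ring
    change (1 : ℝ) ∈ blockInterval p (p - 1)
    rw [blockInterval, if_pos (by omega), hlast, div_self hp'.ne']
    exact ⟨div_le_one_of_le₀ (by linarith) hp'.le, le_rfl⟩
  · have hfloor := Nat.floor_le (mul_nonneg hx.1 hp'.le)
    have hfloor' := Nat.lt_floor_add_one (x * p)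
    have hlt : ⌊x * p⌋₊ < p := by
      have : (⌊x * p⌋₊ : ℝ) < p := by nlinarith
      exact_mod_cast this
    refine ⟨⟨⌊x * p⌋₊, hlt⟩, Ico_subset_blockInterval p _ ⟨?_, ?_⟩⟩
    · rw [div_le_iff₀ hp']; exact hfloor
    · rw [lt_div_iff₀ hp']; exact hfloor'

end BlockInterval

theorem graphStep_eq_of_mem {p r : ℕ} (E : Finset (Fin p × Fin r)) {u : Fin p} {v : Fin r}
    {x y : ℝ} (hx : x ∈ blockInterval p u) (hy : y ∈ blockInterval r v) :
    graphStep p r E x y = if (u, v) ∈ E then 1 else 0 := by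
  unfold graphStep
  congr 1
  refine propext ⟨?_, fun huv => ⟨u, v, huv, hx, hy⟩⟩
  rintro ⟨i, j, hij, hxi, hyj⟩
  rwa [eq_of_mem_blockInterval hxi hx, eq_of_mem_blockInterval hyj hy] at hij

section StepKernel

variable {p r : ℕ} {f : ℝ → ℝ → ℝ} {c : Fin p → Fin r → ℝ} {S T : Set ℝ}

theorem setIntegral_prod_eq_sum_of_blockwise_const (hp : 0 < p) (hr : 0 < r)
    (hf : ∀ (u : Fin p) (v : Fin r), ∀ x ∈ blockInterval p u, ∀ y ∈ blockInterval r v,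
      f x y = c u v)
    (hS : MeasurableSet S) (hT : MeasurableSet T) (hS₁ : S ⊆ Icc 0 1) (hT₁ : T ⊆ Icc 0 1) :
    ∫ q in S ×ˢ T, f q.1 q.2 = ∑ u : Fin p, ∑ v : Fin r,
      volume.real (S ∩ blockInterval p u) * volume.real (T ∩ blockInterval r v) * c u v := by
  set piece : Fin p × Fin r → Set (ℝ × ℝ) :=
    fun uv => (S ∩ blockInterval p uv.1) ×ˢ (T ∩ blockInterval r uv.2)
  have hmeas : ∀ uv, MeasurableSet (piece uv) := fun uv =>
    (hS.inter (measurableSet_blockInterval _ _)).prod (hT.inter (measurableSet_blockInterval _ _))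
  have hconst :
      ∀ uv, EqOn (fun q : ℝ × ℝ => f q.1 q.2) (fun _ => c uv.1 uv.2) (piece uv) := by
    rintro ⟨u, v⟩ ⟨x, y⟩ ⟨⟨-, hx⟩, -, hy⟩
    exact hf u v x hx y hy
  have hcover : S ×ˢ T = ⋃ uv, piece uv := by
    refine Subset.antisymm (fun ⟨x, y⟩ ⟨hx, hy⟩ => ?_)
      (iUnion_subset fun uv => prod_mono inter_subset_left inter_subset_left)
    obtain ⟨u, hu⟩ := exists_mem_blockInterval hp (hS₁ hx)
    obtain ⟨v, hv⟩ := exists_mem_blockInterval hr (hT₁ hy)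
    exact mem_iUnion.2 ⟨(u, v), ⟨hx, hu⟩, hy, hv⟩
  have hdisj : Pairwise (Function.onFun Disjoint piece) := by
    rintro ⟨u, v⟩ ⟨u', v'⟩ hne
    refine disjoint_prod.2 ?_
    by_cases hu : u = u'
    · exact .inr (Disjoint.mono inter_subset_right inter_subset_right
        (pairwise_disjoint_blockInterval r fun hv => hne (Prod.ext hu hv)))
    · exact .inl (Disjoint.mono inter_subset_right inter_subset_right
        (pairwise_disjoint_blockInterval p hu))
  have hint : ∀ uv, IntegrableOn (fun q : ℝ × ℝ => f q.1 q.2) (piece uv) := fun uv =>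
    (integrableOn_const ((isCompact_Icc.prod isCompact_Icc).measure_lt_top.trans_le'
      (measure_mono (prod_mono (inter_subset_left.trans hS₁)
        (inter_subset_left.trans hT₁)))).ne).congr_fun (hconst uv).symm (hmeas uv)
  rw [hcover, integral_iUnion_fintype hmeas hdisj hint, Fintype.sum_prod_type]
  refine Finset.sum_congr rfl fun u _ => Finset.sum_congr rfl fun v _ => ?_
  rw [setIntegral_congr_fun (hmeas _) (hconst _), setIntegral_const, Measure.volume_eq_prod,
    measureReal_prod_prod, smul_eq_mul]

theorem abs_setIntegral_prod_le_of_blockwise_const (hp : 0 < p) (hr : 0 < r)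
    (hf : ∀ (u : Fin p) (v : Fin r), ∀ x ∈ blockInterval p u, ∀ y ∈ blockInterval r v,
      f x y = c u v) {ε : ℝ}
    (hc : ∀ A B, |∑ u ∈ A, ∑ v ∈ B, c u v| ≤ ε * p * r)
    (hS : MeasurableSet S) (hT : MeasurableSet T) (hS₁ : S ⊆ Icc 0 1) (hT₁ : T ⊆ Icc 0 1) :
    |∫ q in S ×ˢ T, f q.1 q.2| ≤ ε := by
  rw [setIntegral_prod_eq_sum_of_blockwise_const hp hr hf hS hT hS₁ hT₁]
  have hpr : (0 : ℝ) < p * r := by positivity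
  have key := abs_sum_sum_mul_le_of_forall_abs_sum_sum_le
    (fun u : Fin p => mul_volume_real_inter_blockInterval_mem_Icc p u S)
    (fun v : Fin r => mul_volume_real_inter_blockInterval_mem_Icc r v T) hc
  have hscale : ∑ u : Fin p, ∑ v : Fin r, p * volume.real (S ∩ blockInterval p u)
        * (r * volume.real (T ∩ blockInterval r v)) * c u v
      = p * r * ∑ u : Fin p, ∑ v : Fin r, volume.real (S ∩ blockInterval p u)
        * volume.real (T ∩ blockInterval r v) * c u v := by
    simp only [Finset.mul_sum]
    exact Finset.sum_congr rfl fun u _ => Finset.sum_congr rfl fun v _ => by ring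
  rw [hscale, abs_mul, abs_of_pos hpr] at key
  exact le_of_mul_le_mul_left (by linarith) hpr

end StepKernel

theorem cutNorm_le_of_forall {W : ℝ → ℝ → ℝ} {ε : ℝ}
    (h : ∀ S T : Set ℝ, MeasurableSet S → MeasurableSet T →
      S ⊆ Icc 0 1 → T ⊆ Icc 0 1 → |∫ q in S ×ˢ T, W q.1 q.2| ≤ ε) :
    cutNorm W ≤ ε := by
  refine csSup_le ⟨_, ∅, ∅, .empty, .empty, empty_subset _, empty_subset _, rfl⟩ ?_
  rintro _ ⟨S, T, hS, hT, hS₁, hT₁, rfl⟩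
  exact h S T hS hT hS₁ hT₁

theorem stmt_3_general (p r n m : ℕ) (hp : 0 < p) (hr : 0 < r)
    (E : Finset (Fin p × Fin r)) (ε : ℝ)
    (P : Fin p → Fin n) (Q : Fin r → Fin m)
    (w : Fin n → Fin m → ℝ)
    (hhom : ∀ i j, ∀ A : Finset (Fin p), ∀ B : Finset (Fin r),
      (∀ u ∈ A, P u = i) → (∀ v ∈ B, Q v = j) →
      |((E.filter (fun q => q.1 ∈ A ∧ q.2 ∈ B)).card : ℝ)
          - w i j * A.card * B.card|
        ≤ ε * ((Finset.univ.filter (fun u : Fin p => P u = i)).card : ℝ)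
            * ((Finset.univ.filter (fun v : Fin r => Q v = j)).card : ℝ))
    (W' : ℝ → ℝ → ℝ)
    (hW' : ∀ (u : Fin p) (v : Fin r), ∀ x ∈ blockInterval p u.val,
      ∀ y ∈ blockInterval r v.val, W' x y = w (P u) (Q v)) :
    cutNorm (fun x y => graphStep p r E x y - W' x y) ≤ ε := by
  refine cutNorm_le_of_forall fun S T hS hT hS₁ hT₁ =>
    abs_setIntegral_prod_le_of_blockwise_const hp hr
      (f := fun x y => graphStep p r E x y - W' x y)
      (c := fun u v => (if (u, v) ∈ E then 1 else 0) - w (P u) (Q v)) ?_ ?_ hS hT hS₁ hT₁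
  · intro u v x hx y hy
    rw [graphStep_eq_of_mem E hx hy, hW' u v x hx y hy]
  · intro A B
    simpa only [Fintype.card_fin] using abs_sum_sum_discrepancy_le E P Q w hhom A B

/-- If there exist partitions of the two vertex sets (encoded by labelling maps
`P : Fin p → Fin n` and `Q : Fin r → Fin m`) such that each induced bipartite graph
`Γ[Uⁱ, Vʲ]` is `ε`-homogeneous of density `w i j`, then the stepfunction of `Γ` is
within `ε` of the corresponding stepfunction `W'` in the cut norm. -/
theorem stmt_3 (p r n m : ℕ) (hp : 0 < p) (hr : 0 < r)
    (E : Finset (Fin p × Fin r)) (ε : ℝ) (hε : 0 < ε)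
    (P : Fin p → Fin n) (Q : Fin r → Fin m)
    (w : Fin n → Fin m → ℝ) (hw : ∀ i j, w i j ∈ Set.Icc (0 : ℝ) 1)
    (hhom : ∀ i j, ∀ A : Finset (Fin p), ∀ B : Finset (Fin r),
      (∀ u ∈ A, P u = i) → (∀ v ∈ B, Q v = j) →
      |((E.filter (fun q => q.1 ∈ A ∧ q.2 ∈ B)).card : ℝ)
          - w i j * A.card * B.card|
        ≤ ε * ((Finset.univ.filter (fun u : Fin p => P u = i)).card : ℝ)
            * ((Finset.univ.filter (fun v : Fin r => Q v = j)).card : ℝ))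
    (W' : ℝ → ℝ → ℝ)
    (hW' : ∀ (u : Fin p) (v : Fin r), ∀ x ∈ blockInterval p u.val,
      ∀ y ∈ blockInterval r v.val, W' x y = w (P u) (Q v)) :
    cutNorm (fun x y => graphStep p r E x y - W' x y) ≤ ε :=
  stmt_3_general p r n m hp hr E ε P Q w hhom W' hW'
end

section
/- Let ε > 0, let (y_i)_{i∈ℕ} be an orthonormal family in L²[0,1], and let (σ_i)_{i∈ℕ} be positive reals with ∑_i σ_i² ≤ 1, such that each y_i is essentially bounded with ‖y_i‖_{L∞} ≤ 1/σ_i and σ_i < ε for every i. Then for every g ∈ L¹[0,1] ∩ L²[0,1], the series ∑_i σ_i⁶ ⟨g, y_i⟩ y_i(x) converges absolutely for almost every x, and its sum h satisfies ‖h‖_{L∞[0,1]} ≤ ε² ‖g‖_{L¹[0,1]}. -/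
open MeasureTheory Set
open scoped ENNReal

/-!
Each coefficient satisfies `|⟨g, y_i⟩| ≤ ‖y_i‖_∞ ‖g‖₁ ≤ ‖g‖₁ / σ_i`, so the `i`-th term of the
series is bounded a.e. by `σ_i⁶ · (‖g‖₁ / σ_i) · (1 / σ_i) = σ_i⁴ ‖g‖₁`. Since `σ_i² < ε²`, we get
`∑ σ_i⁴ ≤ ε² ∑ σ_i² ≤ ε²`, and the Weierstrass M-test, applied off a null set, gives both claims.
-/

section Bounds

variable {α F : Type*} [MeasurableSpace α] {μ : Measure α} [NormedAddCommGroup F]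

lemma ae_norm_le_of_eLpNorm_top_le {f : α → F} {c : ℝ} (hc : 0 ≤ c)
    (hf : eLpNorm f ⊤ μ ≤ ENNReal.ofReal c) : ∀ᵐ x ∂μ, ‖f x‖ ≤ c := by
  rw [eLpNorm_exponent_top] at hf
  filter_upwards [enorm_ae_le_eLpNormEssSup f μ] with x hx
  rw [← ofReal_norm] at hx
  exact (ENNReal.ofReal_le_ofReal_iff hc).mp (hx.trans hf)

lemma abs_integral_mul_le_of_ae_abs_le {g f : α → ℝ} {c : ℝ} (hg : Integrable g μ)
    (hf : AEStronglyMeasurable f μ) (hfc : ∀ᵐ x ∂μ, |f x| ≤ c) :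
    |∫ x, g x * f x ∂μ| ≤ c * ∫ x, |g x| ∂μ := by
  have hpt : ∀ᵐ x ∂μ, ‖g x * f x‖ ≤ |g x| * c := by
    filter_upwards [hfc] with x hx
    rw [Real.norm_eq_abs, abs_mul]
    exact mul_le_mul_of_nonneg_left hx (abs_nonneg _)
  have hdom : Integrable (fun x => |g x| * c) μ := hg.abs.mul_const c
  calc |∫ x, g x * f x ∂μ| ≤ ∫ x, ‖g x * f x‖ ∂μ := by
        rw [← Real.norm_eq_abs]; exact norm_integral_le_integral_norm _
    _ ≤ ∫ x, |g x| * c ∂μ :=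
        integral_mono_ae (hdom.mono' (hg.1.mul hf) hpt).norm hdom hpt
    _ = c * ∫ x, |g x| ∂μ := by rw [integral_mul_const, mul_comm]

lemma ae_summable_norm_and_norm_tsum_le {ι E : Type*} [Countable ι] [NormedAddCommGroup E]
    [CompleteSpace E] {f : ι → α → E} {a : ι → ℝ} (hf : ∀ i, ∀ᵐ x ∂μ, ‖f i x‖ ≤ a i)
    (ha : Summable a) :
    ∀ᵐ x ∂μ, Summable (fun i => ‖f i x‖) ∧ ‖∑' i, f i x‖ ≤ ∑' i, a i := by
  filter_upwards [ae_all_iff.mpr hf] with x hx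
  exact ⟨ha.of_nonneg_of_le (fun i => norm_nonneg _) hx, tsum_of_norm_bounded ha.hasSum hx⟩

end Bounds

section SquareSums

variable {ι : Type*} {a : ι → ℝ} {b : ℝ}

lemma summable_sq_of_nonneg_of_le (h0 : ∀ i, 0 ≤ a i) (hb : ∀ i, a i ≤ b) (ha : Summable a) :
    Summable (fun i => a i ^ 2) :=
  (ha.mul_left b).of_nonneg_of_le (fun i => sq_nonneg _)
    fun i => by rw [sq]; exact mul_le_mul_of_nonneg_right (hb i) (h0 i)

lemma tsum_sq_le_mul_tsum (h0 : ∀ i, 0 ≤ a i) (hb : ∀ i, a i ≤ b) (ha : Summable a) :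
    ∑' i, a i ^ 2 ≤ b * ∑' i, a i := by
  rw [← tsum_mul_left]
  exact (summable_sq_of_nonneg_of_le h0 hb ha).tsum_le_tsum
    (fun i => by rw [sq]; exact mul_le_mul_of_nonneg_right (hb i) (h0 i)) (ha.mul_left b)

end SquareSums

lemma abs_pow_six_mul_mul_le {s c v C : ℝ} (hs : 0 < s) (hc : |c| ≤ 1 / s * C)
    (hv : |v| ≤ 1 / s) : |s ^ 6 * c * v| ≤ (s ^ 2) ^ 2 * C :=
  calc |s ^ 6 * c * v| = s ^ 6 * |c| * |v| := by
        rw [abs_mul, abs_mul, abs_pow, abs_of_pos hs]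
    _ ≤ s ^ 6 * (1 / s * C) * (1 / s) := by
        have := (abs_nonneg c).trans hc
        gcongr
    _ = (s ^ 2) ^ 2 * C := by field_simp

theorem stmt_10_general (ε : ℝ) (y : ℕ → ℝ → ℝ) (σ : ℕ → ℝ)
    (hy2 : ∀ i, MemLp (y i) 2 (volume.restrict (Set.Icc (0:ℝ) 1)))
    (hσpos : ∀ i, 0 < σ i)
    (hσsum : Summable (fun i => σ i ^ 2)) (hσ1 : ∑' i, σ i ^ 2 ≤ 1)
    (hyb : ∀ i, eLpNorm (y i) ⊤ (volume.restrict (Set.Icc (0:ℝ) 1))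
      ≤ ENNReal.ofReal (1 / σ i))
    (hσε : ∀ i, σ i < ε)
    (g : ℝ → ℝ)
    (hg1 : MemLp g 1 (volume.restrict (Set.Icc (0:ℝ) 1))) :
    (∀ᵐ x ∂(volume.restrict (Set.Icc (0:ℝ) 1)),
      Summable fun i => |σ i ^ 6 * (∫ t in Set.Icc (0:ℝ) 1, g t * y i t) * y i x|) ∧
    eLpNorm
        (fun x => ∑' i, σ i ^ 6 * (∫ t in Set.Icc (0:ℝ) 1, g t * y i t) * y i x)
        ⊤ (volume.restrict (Set.Icc (0:ℝ) 1))
      ≤ ENNReal.ofReal (ε ^ 2) * eLpNorm g 1 (volume.restrict (Set.Icc (0:ℝ) 1)) := by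
  set μ := volume.restrict (Icc (0:ℝ) 1)
  have hg : Integrable g μ := memLp_one_iff_integrable.mp hg1
  set C := ∫ t, |g t| ∂μ
  have hC : 0 ≤ C := integral_nonneg fun t => abs_nonneg _
  have hy_bdd (i : ℕ) : ∀ᵐ x ∂μ, |y i x| ≤ 1 / σ i :=
    ae_norm_le_of_eLpNorm_top_le (one_div_pos.mpr (hσpos i)).le (hyb i)
  have hterm (i : ℕ) : ∀ᵐ x ∂μ,
      ‖σ i ^ 6 * (∫ t in Icc (0:ℝ) 1, g t * y i t) * y i x‖ ≤ (σ i ^ 2) ^ 2 * C :=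
    (hy_bdd i).mono fun x hx => abs_pow_six_mul_mul_le (hσpos i)
      (abs_integral_mul_le_of_ae_abs_le hg (hy2 i).1 (hy_bdd i)) hx
  have hσ2 (i : ℕ) : σ i ^ 2 ≤ ε ^ 2 := pow_le_pow_left₀ (hσpos i).le (hσε i).le 2
  have hσ0 (i : ℕ) : 0 ≤ σ i ^ 2 := sq_nonneg _
  have hσ4 : ∑' i, (σ i ^ 2) ^ 2 ≤ ε ^ 2 :=
    (tsum_sq_le_mul_tsum hσ0 hσ2 hσsum).trans (mul_le_of_le_one_right (sq_nonneg ε) hσ1)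
  have hae := ae_summable_norm_and_norm_tsum_le hterm
    ((summable_sq_of_nonneg_of_le hσ0 hσ2 hσsum).mul_right C)
  refine ⟨hae.mono fun x hx => hx.1, ?_⟩
  calc eLpNorm _ ⊤ μ ≤ ENNReal.ofReal (ε ^ 2 * C) := by
        rw [eLpNorm_exponent_top]
        refine eLpNormEssSup_le_of_ae_bound (hae.mono fun x hx => hx.2.trans ?_)
        rw [tsum_mul_right]
        exact mul_le_mul_of_nonneg_right hσ4 hC
    _ = ENNReal.ofReal (ε ^ 2) * eLpNorm g 1 μ := by
        rw [ENNReal.ofReal_mul (sq_nonneg ε), eLpNorm_one_eq_lintegral_enorm,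
          ← ofReal_integral_norm_eq_lintegral_enorm hg]
        rfl

/-- Tail bound for the small singular values: if `(y_i)` is orthonormal in `L²[0,1]`
with `‖y_i‖_∞ ≤ 1/σ_i`, `∑ σ_i² ≤ 1` and `σ_i < ε` for all `i`, then for every
`g ∈ L¹ ∩ L²`, the series `∑_i σ_i⁶ ⟨g, y_i⟩ y_i(x)` converges absolutely a.e. and
its sum `h` satisfies `‖h‖_∞ ≤ ε² ‖g‖₁`. -/
theorem stmt_10 (ε : ℝ) (hε : 0 < ε) (y : ℕ → ℝ → ℝ) (σ : ℕ → ℝ)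
    (hy2 : ∀ i, MemLp (y i) 2 (volume.restrict (Set.Icc (0:ℝ) 1)))
    (horth : ∀ i j, (∫ t in Set.Icc (0:ℝ) 1, y i t * y j t)
      = if i = j then (1:ℝ) else 0)
    (hσpos : ∀ i, 0 < σ i)
    (hσsum : Summable (fun i => σ i ^ 2)) (hσ1 : ∑' i, σ i ^ 2 ≤ 1)
    (hyb : ∀ i, eLpNorm (y i) ⊤ (volume.restrict (Set.Icc (0:ℝ) 1))
      ≤ ENNReal.ofReal (1 / σ i))
    (hσε : ∀ i, σ i < ε)
    (g : ℝ → ℝ)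
    (hg1 : MemLp g 1 (volume.restrict (Set.Icc (0:ℝ) 1)))
    (hg2 : MemLp g 2 (volume.restrict (Set.Icc (0:ℝ) 1))) :
    (∀ᵐ x ∂(volume.restrict (Set.Icc (0:ℝ) 1)),
      Summable fun i => |σ i ^ 6 * (∫ t in Set.Icc (0:ℝ) 1, g t * y i t) * y i x|) ∧
    eLpNorm
        (fun x => ∑' i, σ i ^ 6 * (∫ t in Set.Icc (0:ℝ) 1, g t * y i t) * y i x)
        ⊤ (volume.restrict (Set.Icc (0:ℝ) 1))
      ≤ ENNReal.ofReal (ε ^ 2) * eLpNorm g 1 (volume.restrict (Set.Icc (0:ℝ) 1)) :=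
  stmt_10_general ε y σ hy2 hσpos hσsum hσ1 hyb hσε g hg1
end

section
/- For every ε > 0 there exists Q such that for every finite field F of odd cardinality q ≥ Q and all subsets A, B ⊆ F, one has | |{(x,y) ∈ A × B : ∃ z ∈ F, x + y = z²}| − (1/2)|A||B| | ≤ ε q². In other words, the bipartite graphs on F × F with edge relation 'x + y is a square' are ε-homogeneous of density 1/2 for all sufficiently large odd q. -/
/-! Writing `χ` for the quadratic character, `2 · 1[u is a square] = 1 + χ u + 1[u = 0]`,
so twice the number of square sums `a + b` exceeds `|A||B|` by `∑_{a ∈ A, b ∈ B} χ(a + b)`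
plus the at most `|A|` pairs with `a + b = 0`. Since `∑_x χ(x) χ(x + c) = -1` for `c ≠ 0`
(a Jacobi sum), the vectors `(χ(x + b))_x` are almost orthogonal:
`∑_x (∑_{b ∈ B} χ(x + b))² = |B|(q - |B|)`. Cauchy–Schwarz over `a ∈ A` then bounds the
character sum by `√(q|A||B|) ≤ q^{3/2}`, which is at most `ε q²` once `q ≥ ε⁻²`. -/

open scoped Classical

open Finset

namespace MulChar

variable {F : Type*} [Field F] [Fintype F]

section

variable {R : Type*} [CommRing R] [IsDomain R] {χ : MulChar F R}

theorem IsQuadratic.sum_mul_apply_add_of_ne_zero (hχ : χ.IsQuadratic)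
    (hχ1 : χ ≠ 1) {c : F} (hc : c ≠ 0) : ∑ x, χ x * χ (x + c) = -1 := by
  have hscale : ∀ y : F, χ (-c * y) * χ (-c * y + c) = χ (-1) * (χ y * χ (1 - y)) := by
    intro y
    have hc2 : χ (-c) * χ c = χ (-1) := by
      rw [← map_mul, show -c * c = -1 * c ^ 2 by ring, map_mul, map_pow,
        ← pow_apply' χ two_ne_zero, hχ.sq_eq_one, one_apply hc.isUnit, mul_one]
    rw [show -c * y + c = c * (1 - y) by ring, map_mul, map_mul, ← hc2]
    ring
  calc ∑ x, χ x * χ (x + c) = ∑ y, χ (-c * y) * χ (-c * y + c) :=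
        (Fintype.sum_bijective _ (mulLeft_bijective₀ _ (neg_ne_zero.mpr hc)) _ _
          fun _ => rfl).symm
    _ = χ (-1) * jacobiSum χ χ⁻¹ := by simp only [hscale, jacobiSum, hχ.inv, mul_sum]
    _ = -1 := by
        rw [jacobiSum_nontrivial_inv hχ1, mul_neg, ← map_mul, neg_one_mul, neg_neg, map_one]

theorem IsQuadratic.sum_apply_add_mul_apply_add (hχ : χ.IsQuadratic)
    (hχ1 : χ ≠ 1) (b b' : F) :
    ∑ x, χ (x + b) * χ (x + b') = if b = b' then (Fintype.card F : R) - 1 else -1 := by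
  have hshift : ∑ x, χ (x + b) * χ (x + b') = ∑ y, χ y * χ (y + (b' - b)) := by
    refine Fintype.sum_equiv (Equiv.addRight b) _ _ fun x => ?_
    rw [Equiv.coe_addRight, add_add_sub_cancel]
  split_ifs with hb
  · subst hb
    rw [hshift, sub_self]
    simp only [add_zero, ← sq, ← pow_apply' χ two_ne_zero, hχ.sq_eq_one,
      sum_one_eq_card_units, Fintype.card_eq_card_units_add_one (α := F)]
    push_cast
    ring
  · rw [hshift, hχ.sum_mul_apply_add_of_ne_zero hχ1 (sub_ne_zero.mpr (Ne.symm hb))]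

theorem IsQuadratic.sum_sq_sum_apply_add (hχ : χ.IsQuadratic) (hχ1 : χ ≠ 1)
    (B : Finset F) :
    ∑ x, (∑ b ∈ B, χ (x + b)) ^ 2 = #B * (Fintype.card F - #B) := by
  calc ∑ x, (∑ b ∈ B, χ (x + b)) ^ 2
      = ∑ b ∈ B, ∑ b' ∈ B, ∑ x, χ (x + b) * χ (x + b') := by
        simp only [sq, sum_mul_sum]
        rw [sum_comm]
        exact sum_congr rfl fun _ _ => sum_comm
    _ = ∑ b ∈ B, ∑ b' ∈ B, ((if b = b' then (Fintype.card F : R) else 0) - 1) := by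
        refine sum_congr rfl fun b _ => sum_congr rfl fun b' _ => ?_
        rw [hχ.sum_apply_add_mul_apply_add hχ1]
        split_ifs <;> ring
    _ = #B * (Fintype.card F - #B) := by
        simp only [sum_sub_distrib, sum_ite_eq, sum_ite_mem, inter_self, sum_const,
          nsmul_eq_mul, mul_one]
        ring

end

theorem IsQuadratic.sq_sum_sum_apply_add_le {R : Type*} [CommRing R] [LinearOrder R]
    [IsStrictOrderedRing R] {χ : MulChar F R} (hχ : χ.IsQuadratic) (hχ1 : χ ≠ 1)
    (A B : Finset F) :
    (∑ a ∈ A, ∑ b ∈ B, χ (a + b)) ^ 2 ≤ #A * #B * Fintype.card F := by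
  calc (∑ a ∈ A, ∑ b ∈ B, χ (a + b)) ^ 2 ≤ #A * ∑ a ∈ A, (∑ b ∈ B, χ (a + b)) ^ 2 :=
        sq_sum_le_card_mul_sum_sq
    _ ≤ #A * ∑ x, (∑ b ∈ B, χ (x + b)) ^ 2 :=
        mul_le_mul_of_nonneg_left (sum_le_univ_sum_of_nonneg fun _ => sq_nonneg _)
          (by positivity)
    _ = #A * (#B * (Fintype.card F - #B)) := by rw [hχ.sum_sq_sum_apply_add hχ1]
    _ ≤ #A * #B * Fintype.card F := by
        rw [← mul_assoc, mul_sub]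
        exact sub_le_self (α := R) _ (by positivity)

end MulChar

theorem two_mul_ite_isSquare {F : Type*} [Field F] [Fintype F] (u : F) :
    (if IsSquare u then 2 else 0 : ℤ) = 1 + quadraticChar F u + if u = 0 then 1 else 0 := by
  rcases eq_or_ne u 0 with rfl | hu
  · simp
  by_cases hsq : IsSquare u
  · simp [hsq, hu, (quadraticChar_one_iff_isSquare hu).mpr hsq]
  · simp [hsq, hu, quadraticChar_neg_one_iff_not_isSquare.mpr hsq]

theorem two_mul_card_filter_isSquare_add {F : Type*} [Field F] [Fintype F] (A B : Finset F) :
    2 * (#{p ∈ A ×ˢ B | IsSquare (p.1 + p.2)} : ℤ) =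
      #A * #B + ∑ a ∈ A, ∑ b ∈ B, quadraticChar F (a + b) + #{p ∈ A ×ˢ B | p.1 + p.2 = 0} := by
  simp only [natCast_card_filter, mul_sum, sum_product, mul_ite, mul_one, mul_zero,
    two_mul_ite_isSquare, sum_add_distrib, sum_const, nsmul_eq_mul]

theorem card_filter_add_eq_zero_le {G : Type*} [AddGroup G] (A B : Finset G) :
    #{p ∈ A ×ˢ B | p.1 + p.2 = 0} ≤ #A := by
  refine card_le_card_of_injOn Prod.fst (fun p hp => (mem_product.mp (mem_filter.mp hp).1).1) ?_
  rintro ⟨a, b⟩ hp ⟨a', b'⟩ hp' (rfl : a = a')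
  simp only [mem_coe, mem_filter] at hp hp'
  rw [eq_neg_of_add_eq_zero_right hp.2, eq_neg_of_add_eq_zero_right hp'.2]

theorem sq_two_mul_card_filter_isSquare_add_sub_le {F : Type*} [Field F] [Fintype F]
    (hF : ringChar F ≠ 2) (A B : Finset F) :
    (2 * #{p ∈ A ×ˢ B | IsSquare (p.1 + p.2)} - #A * #B : ℤ) ^ 2 ≤ 4 * Fintype.card F ^ 3 := by
  have hA : (#A : ℤ) ≤ Fintype.card F := by exact_mod_cast card_le_univ A
  have hB : (#B : ℤ) ≤ Fintype.card F := by exact_mod_cast card_le_univ B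
  have hq : (1 : ℤ) ≤ Fintype.card F := by exact_mod_cast Fintype.card_pos
  have hNA : (#{p ∈ A ×ˢ B | p.1 + p.2 = 0} : ℤ) ≤ #A := by
    exact_mod_cast card_filter_add_eq_zero_le A B
  set q : ℤ := (Fintype.card F : ℤ)
  set T := ∑ a ∈ A, ∑ b ∈ B, quadraticChar F (a + b)
  set N : ℤ := (#{p ∈ A ×ˢ B | p.1 + p.2 = 0} : ℤ)
  have hT : T ^ 2 ≤ q ^ 3 :=
    calc T ^ 2 ≤ #A * #B * q :=
          (quadraticChar_isQuadratic F).sq_sum_sum_apply_add_le (quadraticChar_ne_one hF) A B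
      _ ≤ q * q * q := by gcongr
      _ = q ^ 3 := by ring
  have hN : N ^ 2 ≤ q ^ 3 :=
    calc N ^ 2 ≤ q ^ 2 := pow_le_pow_left₀ (by positivity) (hNA.trans hA) 2
      _ ≤ q ^ 3 := pow_le_pow_right₀ hq (by norm_num)
  rw [two_mul_card_filter_isSquare_add, add_assoc, add_sub_cancel_left]
  nlinarith [sq_nonneg (T - N)]

theorem abs_le_mul_sq_of_sq_le_pow_three {x q ε : ℝ} (hε : 0 ≤ ε) (hq : 0 ≤ q)
    (hεq : 1 ≤ ε ^ 2 * q) (hx : x ^ 2 ≤ q ^ 3) : |x| ≤ ε * q ^ 2 := by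
  refine abs_le_of_sq_le_sq ?_ (by positivity)
  calc x ^ 2 ≤ q ^ 3 := hx
    _ ≤ (ε ^ 2 * q) * q ^ 3 := le_mul_of_one_le_left (by positivity) hεq
    _ = (ε * q ^ 2) ^ 2 := by ring

/-- The bipartite graphs on `F × F` with edge relation `∃ z, x + y = z²` over finite
fields of odd cardinality `q` are eventually `ε`-homogeneous of density `1/2`: for
every `ε > 0` there is `Q` such that for every finite field `F` with `|F| = q` odd,
`q ≥ Q`, and all `A, B ⊆ F`,
`| |{(x,y) ∈ A × B : ∃ z, x + y = z²}| − (1/2)|A||B| | ≤ ε q²`. -/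
theorem stmt_15 (ε : ℝ) (hε : 0 < ε) :
    ∃ Q : ℕ, ∀ (F : Type) [Field F] [Fintype F],
      Odd (Fintype.card F) → Q ≤ Fintype.card F →
      ∀ A B : Finset F,
        |((((A ×ˢ B).filter (fun p : F × F => ∃ z : F, p.1 + p.2 = z ^ 2)).card : ℝ))
            - (1 / 2) * A.card * B.card|
          ≤ ε * (Fintype.card F : ℝ) ^ 2 := by
  refine ⟨⌈(ε ^ 2)⁻¹⌉₊, fun F _ _ hodd hQ A B => ?_⟩
  have hF : ringChar F ≠ 2 := fun h => by
    rw [FiniteField.even_card_iff_char_two, ← Nat.even_iff] at h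
    exact Nat.not_even_iff_odd.mpr hodd h
  have hεq : 1 ≤ ε ^ 2 * Fintype.card F := by
    have : (ε ^ 2)⁻¹ ≤ Fintype.card F := (Nat.le_ceil _).trans (by exact_mod_cast hQ)
    rwa [inv_le_iff_one_le_mul₀' (by positivity)] at this
  have hdev : (2 * #{p ∈ A ×ˢ B | IsSquare (p.1 + p.2)} - #A * #B : ℝ) ^ 2
      ≤ 4 * (Fintype.card F : ℝ) ^ 3 := by
    exact_mod_cast sq_two_mul_card_filter_isSquare_add_sub_le hF A B
  simp only [← isSquare_iff_exists_sq]
  refine abs_le_mul_sq_of_sq_le_pow_three hε.le (by positivity) hεq ?_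
  linear_combination hdev / 4
end
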